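/- Let B be a monotone bead distribution of n beads on [μ,∞) such that every monotone distribution A with A ≤ B componentwise can be slid to B by finitely many admissible bead slides. Then the gaps bₖ of B satisfy bₖ > b_{k−2} for all 3 ≤ k ≤ n. -/
import Mathlib


/-- `A` is a monotone bead distribution of `n` beads on `[μ,∞)`.
We use the convention `A 0 = μ`, so the beads are `A 1 < ⋯ < A n` with
`μ ≤ A 1` and nondecreasing successive gaps. -/
def BeadMono (n : ℕ) (μ : ℝ) (A : ℕ → ℝ) : Prop :=
  A 0 = μ ∧ A 0 ≤ A 1 ∧
  (∀ k, 2 ≤ k → k ≤ n → A (k - 1) < A k) ∧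
  (∀ k, 2 ≤ k → k ≤ n → A (k - 1) - A (k - 2) ≤ A k - A (k - 1))

/-- One admissible bead slide: move the `k`-th bead to the right by `δ ≥ 0`
so that the result is again monotone. -/
def BeadSlide (n : ℕ) (μ : ℝ) (A B : ℕ → ℝ) : Prop :=
  ∃ k δ, 1 ≤ k ∧ k ≤ n ∧ 0 ≤ δ ∧
    B = Function.update A k (A k + δ) ∧ BeadMono n μ B

/-- `BeadReach n μ A B`: `B` is obtained from `A` by finitely many admissible slides. -/
def BeadReach (n : ℕ) (μ : ℝ) : (ℕ → ℝ) → (ℕ → ℝ) → Prop :=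
  Relation.ReflTransGen (BeadSlide n μ)

lemma beadSlide_le {n : ℕ} {μ : ℝ} {X Y : ℕ → ℝ} (h : BeadSlide n μ X Y) :
    ∀ i, X i ≤ Y i := by
  obtain ⟨k, δ, -, -, hδ, rfl, -⟩ := h
  intro i
  rcases eq_or_ne i k with rfl | hne
  · simp only [Function.update_self]; linarith
  · rw [Function.update_of_ne hne]

lemma beadReach_le {n : ℕ} {μ : ℝ} {X Y : ℕ → ℝ} (h : BeadReach n μ X Y) :
    ∀ i, X i ≤ Y i := by
  induction h with
  | refl => intro i; exact le_rfl
  | tail _ hstep ih => intro i; exact le_trans (ih i) (beadSlide_le hstep i)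

/-- if every monotone `A ≤ B` can be slid to `B`, then the gaps
of `B` satisfy `b k > b (k - 2)` for all `3 ≤ k ≤ n`. -/
theorem gap_condition_of_slide (n : ℕ) (μ : ℝ) (B : ℕ → ℝ)
    (hB : BeadMono n μ B)
    (h : ∀ A : ℕ → ℝ, BeadMono n μ A → (∀ k, 1 ≤ k → k ≤ n → A k ≤ B k) →
      ∃ C : ℕ → ℝ, BeadReach n μ A C ∧ ∀ k, k ≤ n → C k = B k) :
    ∀ k, 3 ≤ k → k ≤ n → B (k - 2) - B (k - 3) < B k - B (k - 1) := by
  classical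
  obtain ⟨hB0, hB01, hBs, hBg⟩ := hB
  intro k hk3 hkn
  obtain ⟨j, rfl⟩ : ∃ j, k = j + 3 := ⟨k - 3, by omega⟩
  have s1 : j + 3 - 1 = j + 2 := by omega
  have s2 : j + 3 - 2 = j + 1 := by omega
  have s3 : j + 3 - 3 = j := by omega
  rw [s1, s2, s3]
  by_contra hcon
  push_neg at hcon
  -- hcon : B (j+3) - B (j+2) ≤ B (j+1) - B j
  have hgap23 := hBg (j+3) (by omega) hkn
  rw [s1, s2] at hgap23
  have t1 : j + 2 - 1 = j + 1 := by omega
  have t2 : j + 2 - 2 = j := by omega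
  have hgap12 := hBg (j+2) (by omega) (by omega)
  rw [t1, t2] at hgap12
  have e1 : B (j+2) - B (j+1) = B (j+3) - B (j+2) := by linarith
  have e2 : B (j+1) - B j = B (j+3) - B (j+2) := by linarith
  have hcpos : 0 < B (j+3) - B (j+2) := by
    have := hBs (j+3) (by omega) hkn
    rw [s1] at this; linarith
  -- monotonicity of gaps
  have gmono : ∀ d i, 1 ≤ i → i + d ≤ n → B i - B (i-1) ≤ B (i+d) - B (i+d-1) := by
    intro d
    induction d with
    | zero => intro i _ _; simp
    | succ d ih =>
      intro i h1 hn
      have h' := ih i h1 (by omega)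
      have hstep := hBg (i+d+1) (by omega) (by omega)
      have u1 : i + d + 1 - 1 = i + d := by omega
      have u2 : i + d + 1 - 2 = i + d - 1 := by omega
      rw [u1, u2] at hstep
      have u3 : i + (d+1) = i + d + 1 := by omega
      rw [u3, u1]
      linarith
  have hbnn : ∀ i, 1 ≤ i → i ≤ n → 0 ≤ B i - B (i-1) := by
    intro i h1 hn
    have := gmono (i-1) 1 le_rfl (by omega)
    rw [show 1 + (i-1) = i by omega, show (1:ℕ) - 1 = 0 by omega] at this
    linarith
  -- least index whose gap equals c
  have hex : ∃ m, ((1 ≤ m ∧ m ≤ j+1) ∧ B m - B (m-1) = B (j+3) - B (j+2)) :=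
    ⟨j+1, ⟨by omega, le_rfl⟩, by rw [show j+1-1 = j by omega]; exact e2⟩
  obtain ⟨m, ⟨⟨hm1, hmj⟩, hmc⟩, hmin⟩ :
      ∃ m, (((1 ≤ m ∧ m ≤ j+1) ∧ B m - B (m-1) = B (j+3) - B (j+2)) ∧
        ∀ i, i < m → ¬((1 ≤ i ∧ i ≤ j+1) ∧ B i - B (i-1) = B (j+3) - B (j+2))) :=
    ⟨Nat.find hex, Nat.find_spec hex, fun i hi => Nat.find_min hex hi⟩
  -- facts about d = B (m-1) - B (m-2)
  have hd0 : 0 ≤ B (m-1) - B (m-2) := by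
    rcases eq_or_lt_of_le hm1 with h1 | h2
    · rw [show m - 1 = 0 by omega, show m - 2 = 0 by omega]; simp
    · have := hbnn (m-1) (by omega) (by omega)
      rw [show m - 1 - 1 = m - 2 by omega] at this
      exact this
  have hdc : B (m-1) - B (m-2) < B (j+3) - B (j+2) := by
    rcases eq_or_lt_of_le hm1 with h1 | h2
    · rw [show m - 1 = 0 by omega, show m - 2 = 0 by omega]; simpa using hcpos
    · have hne := hmin (m-1) (by omega)
      rw [show m - 1 - 1 = m - 2 by omega] at hne
      have hle := gmono (j+1-(m-1)) (m-1) (by omega) (by omega)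
      rw [show (m-1) + (j+1-(m-1)) = j+1 by omega, show j+1-1 = j by omega,
        show m - 1 - 1 = m - 2 by omega] at hle
      have hne' : B (m-1) - B (m-2) ≠ B (j+3) - B (j+2) := by
        intro hh; exact hne ⟨⟨by omega, by omega⟩, hh⟩
      cases lt_or_eq_of_le (by linarith : B (m-1) - B (m-2) ≤ B (j+3) - B (j+2)) with
      | inl hh => exact hh
      | inr hh => exact absurd hh hne'
  set δ : ℝ := (B (j+3) - B (j+2) - (B (m-1) - B (m-2))) / 2 with hδdef
  have hδpos : 0 < δ := by rw [hδdef]; linarith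
  have hδlt : δ < B (j+3) - B (j+2) := by rw [hδdef]; linarith
  set A : ℕ → ℝ := fun i => if i < m then B i else B i - δ with hAdef
  have hAlt : ∀ i, i < m → A i = B i := by intro i hi; simp only [hAdef, if_pos hi]
  have hAge : ∀ i, m ≤ i → A i = B i - δ := by
    intro i hi; simp only [hAdef, if_neg (by omega : ¬ i < m)]
  have hAmono : BeadMono n μ A := by
    refine ⟨?_, ?_, ?_, ?_⟩
    · rw [hAlt 0 (by omega)]; exact hB0
    · rw [hAlt 0 (by omega)]
      rcases Nat.lt_or_ge 1 m with hh | hh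
      · rw [hAlt 1 hh]; exact hB01
      · have hm1' : m = 1 := by omega
        rw [hAge 1 hh]
        have := hmc
        rw [hm1', show (1:ℕ) - 1 = 0 by omega] at this
        have hd0' : B (m-1) - B (m-2) = 0 := by
          rw [hm1']; norm_num
        rw [hδdef, hd0'] at *
        linarith
    · intro i h2 hin
      obtain ⟨p, rfl⟩ : ∃ p, i = p + 2 := ⟨i - 2, by omega⟩
      have w1 : p + 2 - 1 = p + 1 := by omega
      rw [w1]
      have hstrict := hBs (p+2) (by omega) hin
      rw [w1] at hstrict
      rcases (by omega : p + 2 < m ∨ p + 2 = m ∨ m ≤ p + 1) with hh | hh | hh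
      · rw [hAlt (p+1) (by omega), hAlt (p+2) hh]; exact hstrict
      · rw [hAlt (p+1) (by omega), hAge (p+2) (by omega)]
        have hc' := hmc
        rw [← hh, w1] at hc'
        linarith
      · rw [hAge (p+1) hh, hAge (p+2) (by omega)]
        linarith
    · intro i h2 hin
      obtain ⟨p, rfl⟩ : ∃ p, i = p + 2 := ⟨i - 2, by omega⟩
      have w1 : p + 2 - 1 = p + 1 := by omega
      have w2 : p + 2 - 2 = p := by omega
      rw [w1, w2]
      have hgap := hBg (p+2) (by omega) hin
      rw [w1, w2] at hgap
      rcases (by omega : p + 2 < m ∨ p + 2 = m ∨ p + 1 = m ∨ m ≤ p) with hh | hh | hh | hh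
      · rw [hAlt p (by omega), hAlt (p+1) (by omega), hAlt (p+2) hh]; exact hgap
      · rw [hAlt p (by omega), hAlt (p+1) (by omega), hAge (p+2) (by omega)]
        have hc' := hmc
        rw [← hh, w1] at hc'
        have hd' := hdc
        rw [← hh, w1, w2] at hd'
        have hd0' := hd0
        rw [← hh, w1, w2] at hd0'
        rw [hδdef]
        rw [← hh, w1, w2]
        linarith
      · rw [hAlt p (by omega), hAge (p+1) (by omega), hAge (p+2) (by omega)]
        have hc' := hmc
        rw [← hh, show p + 1 - 1 = p by omega] at hc'
        linarith
      · rw [hAge p hh, hAge (p+1) (by omega), hAge (p+2) (by omega)]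
        linarith
  have hAleB : ∀ i, 1 ≤ i → i ≤ n → A i ≤ B i := by
    intro i _ _
    rcases Nat.lt_or_ge i m with hh | hh
    · rw [hAlt i hh]
    · rw [hAge i hh]; linarith
  obtain ⟨C, hreach, hC⟩ := h A hAmono hAleB
  -- the key invariant
  have key : ∀ X : ℕ → ℝ, Relation.ReflTransGen (BeadSlide n μ) X C →
      X (j+2) < B (j+2) → X (j+1) < B (j+1) → False := by
    intro X hX
    induction hX using Relation.ReflTransGen.head_induction_on with
    | refl =>
      intro h2 _
      have := hC (j+2) (by omega)
      linarith
    | @head X' Z hstep hrest ih =>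
      intro h2 h1
      obtain ⟨i, ε, hi1, hin, hε, hZdef, hZmono⟩ := hstep
      have hZle : ∀ p, p ≤ n → Z p ≤ B p := by
        intro p hp
        have := beadReach_le hrest p
        rw [hC p hp] at this
        exact this
      have hZ2 : Z (j+2) < B (j+2) := by
        rcases eq_or_ne i (j+2) with rfl | hne
        · by_contra hge
          push_neg at hge
          have heq : Z (j+2) = B (j+2) := le_antisymm (hZle _ (by omega)) hge
          have hg := hZmono.2.2.2 (j+3) (by omega) (by omega)
          rw [s1, s2] at hg
          have hz1 : Z (j+1) = X' (j+1) := by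
            rw [hZdef]; exact Function.update_of_ne (by omega) _ _
          have hz3 : Z (j+3) ≤ B (j+3) := hZle _ (by omega)
          rw [heq, hz1] at hg
          linarith
        · have : Z (j+2) = X' (j+2) := by
            rw [hZdef]; exact Function.update_of_ne (Ne.symm hne) _ _
          linarith
      have hZ1 : Z (j+1) < B (j+1) := by
        rcases eq_or_ne i (j+1) with rfl | hne
        · by_contra hge
          push_neg at hge
          have heq : Z (j+1) = B (j+1) := le_antisymm (hZle _ (by omega)) hge
          have hg := hZmono.2.2.2 (j+2) (by omega) (by omega)
          rw [t1, t2] at hg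
          have hz2 : Z (j+2) = X' (j+2) := by
            rw [hZdef]; exact Function.update_of_ne (by omega) _ _
          have hzj : Z j ≤ B j := hZle _ (by omega)
          rw [heq, hz2] at hg
          linarith
        · have : Z (j+1) = X' (j+1) := by
            rw [hZdef]; exact Function.update_of_ne (Ne.symm hne) _ _
          linarith
      exact ih hZ2 hZ1
  exact key A hreach
    (by rw [hAge (j+2) (by omega)]; linarith)
    (by rw [hAge (j+1) (by omega)]; linarith)
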